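/- Let N be a Young function, q > 2 and κ ∈ {0,1} with N(r·s) ≤ r^q·(N(s) + 2κ) for all r ≥ 2, s ≥ 0. Let (E,μ) be a σ-finite measure space with μ(E) < ∞ in case κ = 1, T > 0, (Ω,P) a probability space, and μ̄ := dt ⊗ μ ⊗ P on [0,T] × E × Ω. Let f be measurable with 0 < ‖f‖_{L_N(μ̄)} < ∞. Then ∫_Ω ∫_0^T ‖f(t,·,ω)‖_{L_N(μ)} dt P(dω) ≤ (‖f‖_{L_N(μ̄)} + 2)^q · (1 + 2·T·μ(E)·κ) + T. In particular L_N(μ̄) embeds continuously into L¹([0,T]×Ω → L_N(μ); dt×P). (Paper Lemma 3.7, continuity of the third embedding.) -/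

import Mathlib

open Filter MeasureTheory
open scoped ENNReal

/-- A Young function: continuous, convex, even, nonnegative, vanishing exactly at `0`,
with `N s / s → 0` as `s → 0⁺` and `N s / s → ∞` as `s → ∞`. -/
def IsYoungFunction (N : ℝ → ℝ) : Prop :=
  Continuous N ∧ ConvexOn ℝ Set.univ N ∧ (∀ s, N (-s) = N s) ∧
  (∀ s, 0 ≤ N s) ∧ (∀ s, N s = 0 ↔ s = 0) ∧
  Tendsto (fun s => N s / s) (nhdsWithin 0 (Set.Ioi 0)) (nhds 0) ∧
  Tendsto (fun s => N s / s) atTop atTop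

/-- The Luxemburg norm `inf { λ > 0 : ∫ N(f/λ) dμ ≤ 1 }`, with `inf ∅ = ∞`. -/
noncomputable def luxemburgNorm {X : Type*} [MeasurableSpace X] (N : ℝ → ℝ)
    (μ : Measure X) (f : X → ℝ) : ℝ≥0∞ :=
  ⨅ (lam : ℝ) (_ : 0 < lam) (_ : ∫⁻ x, ENNReal.ofReal (N (f x / lam)) ∂μ ≤ 1),
    ENNReal.ofReal lam

/-!
Fibrewise, convexity gives `‖g‖_{L_N(μ)} ≤ ∫ N(g) dμ + 1`, so by Tonelli the left-hand side is
at most `∫ N(f) dμ̄ + T`. For a Luxemburg witness `λ < ‖f‖_{L_N(μ̄)} + 1` put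
`r = max (λ + 1) 2 ≤ ‖f‖_{L_N(μ̄)} + 2`; since `r ≥ λ`, the growth condition yields
`N(f) ≤ r^q (N(f/λ) + 2κ)` pointwise, and integrating against `μ̄` bounds `∫ N(f) dμ̄` by
`r^q (1 + 2κ μ̄(univ))`.
-/

namespace IsYoungFunction

variable {N : ℝ → ℝ}

lemma map_zero (hN : IsYoungFunction N) : N 0 = 0 :=
  (hN.2.2.2.2.1 0).mpr rfl

lemma map_abs (hN : IsYoungFunction N) (s : ℝ) : N |s| = N s := by
  rcases abs_cases s with ⟨h, _⟩ | ⟨h, _⟩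
  · rw [h]
  · rw [h, hN.2.2.1]

lemma map_mul_le (hN : IsYoungFunction N) {c : ℝ} (hc₀ : 0 ≤ c) (hc₁ : c ≤ 1) (s : ℝ) :
    N (c * s) ≤ c * N s := by
  have h := hN.2.1.2 (Set.mem_univ s) (Set.mem_univ 0) hc₀ (sub_nonneg.mpr hc₁) (by ring)
  simpa [hN.map_zero] using h

lemma mono (hN : IsYoungFunction N) {a b : ℝ} (ha : 0 ≤ a) (hab : a ≤ b) : N a ≤ N b := by
  rcases (ha.trans hab).eq_or_lt with hb | hb
  · rw [le_antisymm (hab.trans hb.symm.le) ha, hb]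
  · calc N a = N (a / b * b) := by rw [div_mul_cancel₀ a hb.ne']
      _ ≤ a / b * N b := hN.map_mul_le (by positivity) ((div_le_one hb).mpr hab) b
      _ ≤ N b := mul_le_of_le_one_left (hN.2.2.2.1 b) ((div_le_one hb).mpr hab)

lemma le_rpow_mul (hN : IsYoungFunction N) {q κ : ℝ}
    (hΔ : ∀ r s : ℝ, 2 ≤ r → 0 ≤ s → N (r * s) ≤ r ^ q * (N s + 2 * κ))
    {lam r : ℝ} (hlam : 0 < lam) (hlam_r : lam ≤ r) (hr : 2 ≤ r) (s : ℝ) :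
    N s ≤ r ^ q * (N (s / lam) + 2 * κ) := by
  have hr₀ : 0 < r := by linarith
  have hscaled : N (|s| / r) ≤ N (s / lam) := by
    rw [← hN.map_abs (s / lam), abs_div, abs_of_pos hlam]
    exact hN.mono (by positivity) (div_le_div_of_nonneg_left (abs_nonneg s) hlam hlam_r)
  calc N s = N (r * (|s| / r)) := by rw [mul_div_cancel₀ _ hr₀.ne', hN.map_abs]
    _ ≤ r ^ q * (N (|s| / r) + 2 * κ) := hΔ r _ hr (by positivity)
    _ ≤ r ^ q * (N (s / lam) + 2 * κ) := by gcongr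

end IsYoungFunction

section Luxemburg

variable {X : Type*} [MeasurableSpace X] {N : ℝ → ℝ} {μ : Measure X} {f : X → ℝ}

lemma luxemburgNorm_le_ofReal {lam : ℝ} (hlam : 0 < lam)
    (hmod : ∫⁻ x, ENNReal.ofReal (N (f x / lam)) ∂μ ≤ 1) :
    luxemburgNorm N μ f ≤ ENNReal.ofReal lam :=
  iInf_le_of_le lam <| iInf_le_of_le hlam <| iInf_le _ hmod

lemma exists_lt_of_luxemburgNorm_lt {c : ℝ≥0∞} (hc : luxemburgNorm N μ f < c) :
    ∃ lam : ℝ, 0 < lam ∧ ∫⁻ x, ENNReal.ofReal (N (f x / lam)) ∂μ ≤ 1 ∧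
      ENNReal.ofReal lam < c := by
  obtain ⟨lam, hlam⟩ := iInf_lt_iff.mp hc
  obtain ⟨hlam₀, hlam⟩ := iInf_lt_iff.mp hlam
  obtain ⟨hmod, hlt⟩ := iInf_lt_iff.mp hlam
  exact ⟨lam, hlam₀, hmod, hlt⟩

-- `λ = ∫ N(f) + 1 ≥ 1` is admissible since convexity and `N 0 = 0` give `N(f/λ) ≤ N(f)/λ`.
lemma luxemburgNorm_le_lintegral_add_one (hN : IsYoungFunction N) (μ : Measure X) (f : X → ℝ) :
    luxemburgNorm N μ f ≤ ∫⁻ x, ENNReal.ofReal (N (f x)) ∂μ + 1 := by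
  set A := ∫⁻ x, ENNReal.ofReal (N (f x)) ∂μ
  rcases eq_or_ne A ⊤ with hA | hA
  · simp [hA]
  set lam := A.toReal + 1
  have hlam : 0 < lam := by positivity
  have hinv₀ : 0 ≤ lam⁻¹ := inv_nonneg.mpr hlam.le
  have hinv₁ : lam⁻¹ ≤ 1 := inv_le_one_of_one_le₀ (le_add_of_nonneg_left ENNReal.toReal_nonneg)
  have hmod : ∫⁻ x, ENNReal.ofReal (N (f x / lam)) ∂μ ≤ 1 :=
    calc ∫⁻ x, ENNReal.ofReal (N (f x / lam)) ∂μ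
        ≤ ∫⁻ x, ENNReal.ofReal lam⁻¹ * ENNReal.ofReal (N (f x)) ∂μ := by
          refine lintegral_mono fun x => ?_
          rw [← ENNReal.ofReal_mul hinv₀, div_eq_inv_mul]
          exact ENNReal.ofReal_le_ofReal (hN.map_mul_le hinv₀ hinv₁ (f x))
      _ = ENNReal.ofReal (lam⁻¹ * A.toReal) := by
          rw [lintegral_const_mul' _ _ ENNReal.ofReal_ne_top, ENNReal.ofReal_mul hinv₀,
            ENNReal.ofReal_toReal hA]
      _ ≤ 1 := by
          rw [ENNReal.ofReal_le_one, inv_mul_le_one₀ hlam]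
          exact le_add_of_nonneg_right zero_le_one
  calc luxemburgNorm N μ f ≤ ENNReal.ofReal lam := luxemburgNorm_le_ofReal hlam hmod
    _ = A + 1 := by
        rw [ENNReal.ofReal_add ENNReal.toReal_nonneg zero_le_one, ENNReal.ofReal_toReal hA,
          ENNReal.ofReal_one]

lemma lintegral_le_of_luxemburgNorm_lt_top (hN : IsYoungFunction N) {q κ : ℝ} (hq : 0 ≤ q)
    (hΔ : ∀ r s : ℝ, 2 ≤ r → 0 ≤ s → N (r * s) ≤ r ^ q * (N s + 2 * κ))
    (hf : luxemburgNorm N μ f < ⊤) :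
    ∫⁻ x, ENNReal.ofReal (N (f x)) ∂μ ≤
      (luxemburgNorm N μ f + 2) ^ q * (1 + 2 * μ Set.univ * ENNReal.ofReal κ) := by
  obtain ⟨lam, hlam, hmod, hlt⟩ :=
    exists_lt_of_luxemburgNorm_lt (ENNReal.lt_add_right hf.ne one_ne_zero)
  set r := max (lam + 1) 2
  have hr : 2 ≤ r := le_max_right _ _
  have hr₀ : 0 < r := by linarith
  have hrL : ENNReal.ofReal r ≤ luxemburgNorm N μ f + 2 := by
    rw [ENNReal.ofReal_max, max_le_iff, ENNReal.ofReal_add hlam.le zero_le_one,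
      ENNReal.ofReal_one, ENNReal.ofReal_ofNat]
    refine ⟨?_, le_add_self⟩
    calc ENNReal.ofReal lam + 1 ≤ luxemburgNorm N μ f + 1 + 1 := by gcongr
      _ = luxemburgNorm N μ f + 2 := by rw [add_assoc, one_add_one_eq_two]
  have hpoint : ∀ x, ENNReal.ofReal (N (f x)) ≤ ENNReal.ofReal r ^ q *
      (ENNReal.ofReal (N (f x / lam)) + 2 * ENNReal.ofReal κ) := fun x =>
    calc ENNReal.ofReal (N (f x))
        ≤ ENNReal.ofReal (r ^ q * (N (f x / lam) + 2 * κ)) := ENNReal.ofReal_le_ofReal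
          (hN.le_rpow_mul hΔ hlam (by linarith [le_max_left (lam + 1) 2]) hr (f x))
      _ ≤ ENNReal.ofReal r ^ q * (ENNReal.ofReal (N (f x / lam)) + 2 * ENNReal.ofReal κ) := by
          rw [ENNReal.ofReal_mul (by positivity), ENNReal.ofReal_rpow_of_pos hr₀]
          gcongr
          refine ENNReal.ofReal_add_le.trans ?_
          rw [ENNReal.ofReal_mul zero_le_two, ENNReal.ofReal_ofNat]
  calc ∫⁻ x, ENNReal.ofReal (N (f x)) ∂μ
      ≤ ∫⁻ x, ENNReal.ofReal r ^ q *
          (ENNReal.ofReal (N (f x / lam)) + 2 * ENNReal.ofReal κ) ∂μ := lintegral_mono hpoint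
    _ = ENNReal.ofReal r ^ q * (∫⁻ x, ENNReal.ofReal (N (f x / lam)) ∂μ +
          2 * ENNReal.ofReal κ * μ Set.univ) := by
        rw [lintegral_const_mul' _ _ (ENNReal.rpow_ne_top_of_nonneg hq ENNReal.ofReal_ne_top), lintegral_add_right _ measurable_const,
          lintegral_const]
    _ ≤ (luxemburgNorm N μ f + 2) ^ q * (1 + 2 * μ Set.univ * ENNReal.ofReal κ) := by
        rw [mul_right_comm 2]
        gcongr

end Luxemburg

lemma lintegral_lintegral_prod_middle {α β γ : Type*} [MeasurableSpace α] [MeasurableSpace β]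
    [MeasurableSpace γ] (ν : Measure α) (μ : Measure β) [SFinite μ] (P : Measure γ) [SFinite P]
    {g : α × β × γ → ℝ≥0∞} (hg : Measurable g) :
    ∫⁻ p, ∫⁻ b, g (p.1, b, p.2) ∂μ ∂(ν.prod P) = ∫⁻ x, g x ∂(ν.prod (μ.prod P)) := by
  have hslice : Measurable fun p : α × γ => ∫⁻ b, g (p.1, b, p.2) ∂μ :=
    Measurable.lintegral_prod_right (f := fun (p : α × γ) (b : β) => g (p.1, b, p.2)) (hg.comp (by fun_prop))
  rw [lintegral_prod _ hslice.aemeasurable, lintegral_prod _ hg.aemeasurable]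
  refine lintegral_congr fun a => ?_
  rw [lintegral_prod (fun y => g (a, y)) (hg.comp (by fun_prop)).aemeasurable]
  exact lintegral_lintegral_swap (f := fun y b => g (a, b, y)) (hg.comp (by fun_prop)).aemeasurable

theorem stmt15_general {E Ω : Type*} [MeasurableSpace E] [MeasurableSpace Ω]
    (μ : Measure E) [SigmaFinite μ] (P : Measure Ω) [IsProbabilityMeasure P]
    (N : ℝ → ℝ) (hN : IsYoungFunction N) (q κ : ℝ) (hq : 2 < q)
    (hΔ : ∀ r s : ℝ, 2 ≤ r → 0 ≤ s → N (r * s) ≤ r ^ q * (N s + 2 * κ))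
    (T : ℝ)
    (f : ℝ × E × Ω → ℝ) (hf : Measurable f)
    (hfn : luxemburgNorm N ((volume.restrict (Set.Icc (0:ℝ) T)).prod (μ.prod P)) f < ⊤) :
    ∫⁻ p, luxemburgNorm N μ (fun e => f (p.1, e, p.2))
        ∂((volume.restrict (Set.Icc (0:ℝ) T)).prod P) ≤
      (luxemburgNorm N ((volume.restrict (Set.Icc (0:ℝ) T)).prod (μ.prod P)) f + 2) ^ q *
          (1 + 2 * ENNReal.ofReal T * μ Set.univ * ENNReal.ofReal κ)
        + ENNReal.ofReal T := by
  set ν := volume.restrict (Set.Icc (0:ℝ) T)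
  have hν : ν Set.univ = ENNReal.ofReal T := by simp [ν]
  have hμbar : ν.prod (μ.prod P) Set.univ = ENNReal.ofReal T * μ Set.univ := by
    rw [← Set.univ_prod_univ, Measure.prod_prod, ← Set.univ_prod_univ, Measure.prod_prod]
    simp [hν]
  have hmodular : Measurable fun x => ENNReal.ofReal (N (f x)) :=
    ENNReal.measurable_ofReal.comp (hN.1.measurable.comp hf)
  calc ∫⁻ p, luxemburgNorm N μ (fun e => f (p.1, e, p.2)) ∂(ν.prod P)
      ≤ ∫⁻ p, (∫⁻ e, ENNReal.ofReal (N (f (p.1, e, p.2))) ∂μ) + 1 ∂(ν.prod P) :=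
        lintegral_mono fun p => luxemburgNorm_le_lintegral_add_one hN μ _
    _ = ∫⁻ x, ENNReal.ofReal (N (f x)) ∂(ν.prod (μ.prod P)) + ENNReal.ofReal T := by
        rw [lintegral_add_right _ measurable_const, lintegral_const, ← Set.univ_prod_univ,
          Measure.prod_prod, lintegral_lintegral_prod_middle ν μ P hmodular]
        simp [hν]
    _ ≤ (luxemburgNorm N (ν.prod (μ.prod P)) f + 2) ^ q *
          (1 + 2 * ν.prod (μ.prod P) Set.univ * ENNReal.ofReal κ) + ENNReal.ofReal T := by
        gcongr
        exact lintegral_le_of_luxemburgNorm_lt_top hN (by linarith) hΔ hfn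
    _ = _ := by rw [hμbar, ← mul_assoc]

/-- Paper Lemma 3.7, continuity of the third embedding: on `μ̄ = dt ⊗ μ ⊗ P`,
`∫∫ ‖f(t,·,ω)‖_{L_N(μ)} dt P(dω) ≤ (‖f‖_{L_N(μ̄)} + 2)^q (1 + 2 T μ(E) κ) + T`;
i.e. `L_N(μ̄)` embeds continuously into `L¹([0,T]×Ω → L_N(μ))`. -/
theorem stmt15 {E Ω : Type*} [MeasurableSpace E] [MeasurableSpace Ω]
    (μ : Measure E) [SigmaFinite μ] (P : Measure Ω) [IsProbabilityMeasure P]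
    (N : ℝ → ℝ) (hN : IsYoungFunction N) (q κ : ℝ) (hq : 2 < q) (hκ : κ = 0 ∨ κ = 1)
    (hΔ : ∀ r s : ℝ, 2 ≤ r → 0 ≤ s → N (r * s) ≤ r ^ q * (N s + 2 * κ))
    (hfin : κ = 1 → μ Set.univ < ⊤)
    (T : ℝ) (hT : 0 < T)
    (f : ℝ × E × Ω → ℝ) (hf : Measurable f)
    (h0 : 0 < luxemburgNorm N ((volume.restrict (Set.Icc (0:ℝ) T)).prod (μ.prod P)) f)
    (hfn : luxemburgNorm N ((volume.restrict (Set.Icc (0:ℝ) T)).prod (μ.prod P)) f < ⊤) :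
    ∫⁻ p, luxemburgNorm N μ (fun e => f (p.1, e, p.2))
        ∂((volume.restrict (Set.Icc (0:ℝ) T)).prod P) ≤
      (luxemburgNorm N ((volume.restrict (Set.Icc (0:ℝ) T)).prod (μ.prod P)) f + 2) ^ q *
          (1 + 2 * ENNReal.ofReal T * μ Set.univ * ENNReal.ofReal κ)
        + ENNReal.ofReal T :=
  stmt15_general μ P N hN q κ hq hΔ T f hf hfn
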